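/- For every η > 0 there exist α ∈ (0, 1/2) and ε > 0 with the following property: any Borel probability measure μ on ℝ² with μ(K_α) = 1 satisfying (1+ε)^{−n} 4^{−n} ≤ μ(Q_w) ≤ (1+ε)^n 4^{−n} for every n ∈ ℕ and every word w ∈ (Fin 4)^n has the property that every Borel set A ⊆ ℝ² with μ(A) > 0 satisfies dimH A > 2 − η. -/

import Mathlib

/-- The four corner vectors `(±(1-α)/2, ±(1-α)/2)` of the 4-corner Cantor construction. -/
noncomputable def cornerV (α : ℝ) : Fin 4 → EuclideanSpace ℝ (Fin 2) := fun i =>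
  (WithLp.equiv 2 (Fin 2 → ℝ)).symm
    ![if (i : ℕ) % 2 = 0 then (1 - α) / 2 else -((1 - α) / 2),
      if (i : ℕ) < 2 then (1 - α) / 2 else -((1 - α) / 2)]

/-- The coding map `π(x) = ∑ αⁿ • v (x n)` of the 4-corner Cantor set. -/
noncomputable def cantorPi (α : ℝ) (x : ℕ → Fin 4) : EuclideanSpace ℝ (Fin 2) :=
  ∑' n : ℕ, α ^ n • cornerV α (x n)

/-- The cylinder piece `Q_w = π({x : x k = w k for all k < n})`. -/
noncomputable def cylPiece (α : ℝ) {n : ℕ} (w : Fin n → Fin 4) :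
    Set (EuclideanSpace ℝ (Fin 2)) :=
  cantorPi α '' {x : ℕ → Fin 4 | ∀ k : Fin n, x k = w k}

/-! Two codings that first differ at index `k` give points at distance at least `(1 - 2α) αᵏ`:
the four first-level pieces `cornerV α i + α • K_α` sit in the corners of the square
`[-1/2, 1/2]²`, separated by gaps of width `1 - 2α`, and self-similarity scales this by `αᵏ`.
Hence a set of diameter `δ` meets `K_α` inside a single cylinder of a generation `n + 1` with
`αⁿ⁺¹ ≈ δ`, whose mass is at most `(αᵈ)ⁿ⁺¹ ≲ δᵈ` once `ε` is chosen with `(1 + ε) / 4 = αᵈ`.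
By the mass distribution principle `μ` is then dominated by a multiple of `μH[d]`, so
`dimH A ≥ d` whenever `μ A > 0`; every `d < 2` is reachable since `αᵈ > 1/4` for `α < 1/2`
close enough to `1/2`. -/

open MeasureTheory Set Filter Topology Metric
open scoped ENNReal

section

variable {α : ℝ}

lemma abs_cornerV_apply (hα : α ≤ 1) (i : Fin 4) (j : Fin 2) : |cornerV α i j| = (1 - α) / 2 := by
  have h : 0 ≤ (1 - α) / 2 := by linarith
  fin_cases i <;> fin_cases j <;> simp [cornerV, abs_of_nonneg h]

lemma exists_abs_cornerV_sub_apply (hα : α ≤ 1) {i i' : Fin 4} (h : i ≠ i') :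
    ∃ j, |cornerV α i j - cornerV α i' j| = 1 - α := by
  have hgap : |-((1 - α) / 2) - (1 - α) / 2| = 1 - α := by rw [abs_of_nonpos (by linarith)]; ring
  rw [Fin.exists_fin_two]
  fin_cases i <;> fin_cases i' <;> simp_all [cornerV]

lemma norm_pow_smul_le {ι E : Type*} [Fintype ι] [SeminormedAddCommGroup E] [NormedSpace ℝ E]
    (h0 : 0 ≤ α) (v : ι → E) (n : ℕ) (i : ι) : ‖α ^ n • v i‖ ≤ (∑ j, ‖v j‖) * α ^ n := by
  rw [norm_smul, norm_pow, Real.norm_eq_abs, abs_of_nonneg h0, mul_comm]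
  gcongr
  exact Finset.single_le_sum (fun j _ => norm_nonneg (v j)) (Finset.mem_univ i)

lemma summable_pow_smul_comp {ι E : Type*} [Fintype ι] [NormedAddCommGroup E] [NormedSpace ℝ E]
    [CompleteSpace E] (h0 : 0 ≤ α) (h1 : α < 1) (v : ι → E) (x : ℕ → ι) :
    Summable fun n => α ^ n • v (x n) :=
  .of_norm_bounded ((summable_geometric_of_lt_one h0 h1).mul_left _)
    fun n => norm_pow_smul_le h0 v n (x n)

lemma continuous_cantorPi (h0 : 0 ≤ α) (h1 : α < 1) : Continuous (cantorPi α) := by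
  have hv : Continuous (cornerV α) := continuous_of_discreteTopology
  exact continuous_tsum (fun n => by fun_prop)
    ((summable_geometric_of_lt_one h0 h1).mul_left _)
    fun n x => norm_pow_smul_le h0 (cornerV α) n (x n)

lemma cantorPi_eq_add_smul (h0 : 0 ≤ α) (h1 : α < 1) (x : ℕ → Fin 4) :
    cantorPi α x = cornerV α (x 0) + α • cantorPi α (fun n => x (n + 1)) := by
  rw [cantorPi, (summable_pow_smul_comp h0 h1 _ x).tsum_eq_zero_add, cantorPi,
    ← (summable_pow_smul_comp h0 h1 _ _).tsum_const_smul]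
  simp [pow_succ', mul_smul]

lemma cantorPi_apply (h0 : 0 ≤ α) (h1 : α < 1) (x : ℕ → Fin 4) (j : Fin 2) :
    cantorPi α x j = ∑' n, α ^ n * cornerV α (x n) j := by
  simpa [cantorPi] using
    (EuclideanSpace.proj (𝕜 := ℝ) j).map_tsum (summable_pow_smul_comp h0 h1 _ x)

lemma abs_cantorPi_apply_le (h0 : 0 ≤ α) (h1 : α < 1) (x : ℕ → Fin 4) (j : Fin 2) :
    |cantorPi α x j| ≤ 1 / 2 := by
  have hsum : HasSum (fun n => α ^ n * ((1 - α) / 2)) (1 / 2) := by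
    have := (hasSum_geometric_of_lt_one h0 h1).mul_right ((1 - α) / 2)
    rwa [← mul_div_assoc, inv_mul_cancel₀ (sub_pos.2 h1).ne'] at this
  rw [cantorPi_apply h0 h1]
  refine (Real.norm_eq_abs _).symm.trans_le (tsum_of_norm_bounded hsum fun n => ?_)
  rw [Real.norm_eq_abs, abs_mul, abs_of_nonneg (pow_nonneg h0 n), abs_cornerV_apply h1.le]

lemma dist_cantorPi_of_head_eq (h0 : 0 ≤ α) (h1 : α < 1) {x y : ℕ → Fin 4} (h : x 0 = y 0) :
    dist (cantorPi α x) (cantorPi α y) =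
      α * dist (cantorPi α fun n => x (n + 1)) (cantorPi α fun n => y (n + 1)) := by
  rw [cantorPi_eq_add_smul h0 h1 x, cantorPi_eq_add_smul h0 h1 y, h, dist_add_left,
    dist_smul₀, Real.norm_eq_abs, abs_of_nonneg h0]

lemma one_sub_two_mul_le_dist_cantorPi (h0 : 0 ≤ α) (h1 : α < 1) {x y : ℕ → Fin 4}
    (h : x 0 ≠ y 0) : 1 - 2 * α ≤ dist (cantorPi α x) (cantorPi α y) := by
  obtain ⟨j, hj⟩ := exists_abs_cornerV_sub_apply h1.le h
  set x' : ℕ → Fin 4 := fun n => x (n + 1)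
  set y' : ℕ → Fin 4 := fun n => y (n + 1)
  have hcoord : cantorPi α x j - cantorPi α y j =
      (cornerV α (x 0) j - cornerV α (y 0) j) + α * (cantorPi α x' j - cantorPi α y' j) := by
    rw [cantorPi_eq_add_smul h0 h1 x, cantorPi_eq_add_smul h0 h1 y]
    simp only [PiLp.add_apply, PiLp.smul_apply, smul_eq_mul]
    ring
  have htail : |α * (cantorPi α x' j - cantorPi α y' j)| ≤ α := by
    rw [abs_mul, abs_of_nonneg h0]
    refine mul_le_of_le_one_right h0 ((abs_sub _ _).trans ?_)
    linarith [abs_cantorPi_apply_le h0 h1 x' j, abs_cantorPi_apply_le h0 h1 y' j]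
  calc 1 - 2 * α ≤ |cantorPi α x j - cantorPi α y j| := by
        rw [hcoord]
        linarith [abs_sub_abs_le_abs_add (cornerV α (x 0) j - cornerV α (y 0) j)
          (α * (cantorPi α x' j - cantorPi α y' j))]
    _ = dist (cantorPi α x j) (cantorPi α y j) := (Real.dist_eq _ _).symm
    _ ≤ dist (cantorPi α x) (cantorPi α y) := PiLp.dist_apply_le _ _ j

lemma head_eq_of_dist_cantorPi_lt (h0 : 0 < α) (h1 : α < 1) {n : ℕ} {x y : ℕ → Fin 4}
    (h : dist (cantorPi α x) (cantorPi α y) < (1 - 2 * α) * α ^ n) : x 0 = y 0 := by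
  by_contra hne
  nlinarith [one_sub_two_mul_le_dist_cantorPi h0.le h1 hne, pow_le_one₀ h0.le h1.le (n := n),
    pow_pos h0 n, dist_nonneg (x := cantorPi α x) (y := cantorPi α y)]

lemma eq_of_dist_cantorPi_lt (h0 : 0 < α) (h1 : α < 1) {n : ℕ} {x y : ℕ → Fin 4}
    (h : dist (cantorPi α x) (cantorPi α y) < (1 - 2 * α) * α ^ n) : ∀ k ≤ n, x k = y k := by
  induction n generalizing x y with
  | zero =>
    intro k hk
    rw [Nat.le_zero.1 hk]
    exact head_eq_of_dist_cantorPi_lt h0 h1 h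
  | succ n ih =>
    have hhead := head_eq_of_dist_cantorPi_lt h0 h1 h
    rintro (_ | k) hk
    · exact hhead
    · rw [dist_cantorPi_of_head_eq h0.le h1 hhead, pow_succ', mul_left_comm] at h
      exact ih (lt_of_mul_lt_mul_left h h0.le) k (by omega)

lemma exists_inter_range_subset_cylPiece (h0 : 0 < α) (h1 : α < 1) {n : ℕ}
    {s : Set (EuclideanSpace ℝ (Fin 2))} (hs : ediam s < ENNReal.ofReal ((1 - 2 * α) * α ^ n)) :
    ∃ w : Fin (n + 1) → Fin 4, s ∩ range (cantorPi α) ⊆ cylPiece α w := by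
  rcases (s ∩ range (cantorPi α)).eq_empty_or_nonempty with hempty | ⟨_, hps, x, rfl⟩
  · exact ⟨fun _ => 0, hempty.subset.trans (empty_subset _)⟩
  refine ⟨fun k => x k, ?_⟩
  rintro _ ⟨hqs, y, rfl⟩
  have hdist : dist (cantorPi α x) (cantorPi α y) < (1 - 2 * α) * α ^ n := by
    rw [← ENNReal.ofReal_lt_ofReal_iff_of_nonneg dist_nonneg, ← edist_dist]
    exact (edist_le_ediam_of_mem hps hqs).trans_lt hs
  exact ⟨y, fun k => (eq_of_dist_cantorPi_lt h0 h1 hdist k (Nat.lt_succ_iff.1 k.isLt)).symm, rfl⟩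

lemma measure_le_of_ediam_lt (h0 : 0 < α) (h1 : α < 1) {μ : Measure (EuclideanSpace ℝ (Fin 2))}
    [IsProbabilityMeasure μ] (hK : μ (range (cantorPi α)) = 1) {b : ℕ → ℝ≥0∞}
    (hcyl : ∀ n (w : Fin n → Fin 4), μ (cylPiece α w) ≤ b n) {n : ℕ}
    {s : Set (EuclideanSpace ℝ (Fin 2))} (hs : ediam s < ENNReal.ofReal ((1 - 2 * α) * α ^ n)) :
    μ s ≤ b (n + 1) := by
  have hKc : μ (range (cantorPi α))ᶜ = 0 :=
    (prob_compl_eq_zero_iff (isCompact_range (continuous_cantorPi h0.le h1)).measurableSet).2 hK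
  obtain ⟨w, hw⟩ := exists_inter_range_subset_cylPiece h0 h1 hs
  calc μ s = μ (s ∩ range (cantorPi α)) := (measure_inter_conull hKc).symm
    _ ≤ μ (cylPiece α w) := measure_mono hw
    _ ≤ b (n + 1) := hcyl _ w

lemma measure_eq_zero_of_ediam_eq_zero (h0 : 0 < α) (h1 : α < 1 / 2) {d : ℝ} (hd : 0 < d)
    {μ : Measure (EuclideanSpace ℝ (Fin 2))} [IsProbabilityMeasure μ]
    (hK : μ (range (cantorPi α)) = 1)
    (hcyl : ∀ n (w : Fin n → Fin 4), μ (cylPiece α w) ≤ ENNReal.ofReal (α ^ d) ^ n)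
    {s : Set (EuclideanSpace ℝ (Fin 2))} (hs : ediam s = 0) : μ s = 0 := by
  have hα1 : α < 1 := by linarith
  have hβ : ENNReal.ofReal (α ^ d) < 1 := ENNReal.ofReal_lt_one.2 (Real.rpow_lt_one h0.le hα1 hd)
  have hc : 0 < 1 - 2 * α := by linarith
  refine le_antisymm (ge_of_tendsto'
    ((ENNReal.tendsto_pow_atTop_nhds_zero_of_lt_one hβ).comp (tendsto_add_atTop_nat 1))
    fun n => measure_le_of_ediam_lt h0 hα1 hK hcyl ?_) bot_le
  rw [hs]
  exact ENNReal.ofReal_pos.2 (by positivity)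

lemma mul_measure_le_ediam_rpow (h0 : 0 < α) (h1 : α < 1 / 2) {d : ℝ} (hd : 0 < d)
    {μ : Measure (EuclideanSpace ℝ (Fin 2))} [IsProbabilityMeasure μ]
    (hK : μ (range (cantorPi α)) = 1)
    (hcyl : ∀ n (w : Fin n → Fin 4), μ (cylPiece α w) ≤ ENNReal.ofReal (α ^ d) ^ n)
    {s : Set (EuclideanSpace ℝ (Fin 2))} (hs : ediam s ≤ ENNReal.ofReal ((1 - 2 * α) / 2)) :
    ENNReal.ofReal (((1 - 2 * α) / 2) ^ d) * μ s ≤ ediam s ^ d := by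
  rcases eq_zero_or_pos (ediam s) with hzero | hpos
  · simp [measure_eq_zero_of_ediam_eq_zero h0 h1 hd hK hcyl hzero]
  have hα1 : α < 1 := by linarith
  have hc : 0 < 1 - 2 * α := by linarith
  have hfin : ediam s ≠ ⊤ := ne_top_of_le_ne_top ENNReal.ofReal_ne_top hs
  set δ := (ediam s).toReal
  have hδ : 0 < δ := ENNReal.toReal_pos hpos.ne' hfin
  have hδc : 2 * δ / (1 - 2 * α) ≤ 1 := by
    rw [div_le_one hc]
    linarith [ENNReal.toReal_le_of_le_ofReal (by linarith) hs]
  obtain ⟨n, hlow, hup⟩ := exists_nat_pow_near_of_lt_one (by positivity) hδc h0 hα1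
  have hsn : ediam s < ENNReal.ofReal ((1 - 2 * α) * α ^ n) := by
    rw [← ENNReal.ofReal_toReal hfin, ENNReal.ofReal_lt_ofReal_iff (by positivity)]
    rw [div_le_iff₀ hc] at hup
    nlinarith
  calc ENNReal.ofReal (((1 - 2 * α) / 2) ^ d) * μ s
      ≤ ENNReal.ofReal (((1 - 2 * α) / 2) ^ d) * ENNReal.ofReal ((2 * δ / (1 - 2 * α)) ^ d) := by
        grw [measure_le_of_ediam_lt h0 hα1 hK hcyl hsn, ← ENNReal.ofReal_pow (by positivity),
          Real.rpow_pow_comm h0.le, Real.rpow_le_rpow (pow_nonneg h0.le _) hlow.le hd.le]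
    _ = ENNReal.ofReal (δ ^ d) := by
        rw [← ENNReal.ofReal_mul (by positivity), ← Real.mul_rpow (by positivity) (by positivity)]
        field_simp
    _ = ediam s ^ d := by rw [← ENNReal.ofReal_rpow_of_pos hδ, ENNReal.ofReal_toReal hfin]

lemma smul_le_hausdorffMeasure (h0 : 0 < α) (h1 : α < 1 / 2) {d : ℝ} (hd : 0 < d)
    {μ : Measure (EuclideanSpace ℝ (Fin 2))} [IsProbabilityMeasure μ]
    (hK : μ (range (cantorPi α)) = 1)
    (hcyl : ∀ n (w : Fin n → Fin 4), μ (cylPiece α w) ≤ ENNReal.ofReal (α ^ d) ^ n) :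
    ENNReal.ofReal (((1 - 2 * α) / 2) ^ d) • μ ≤ μH[d] :=
  Measure.le_hausdorffMeasure d _ (ENNReal.ofReal ((1 - 2 * α) / 2))
    (ENNReal.ofReal_pos.2 (by linarith)) fun _ hs =>
      mul_measure_le_ediam_rpow h0 h1 hd hK hcyl hs

end

lemma ofReal_le_dimH_of_smul_le_hausdorffMeasure {X : Type*} [EMetricSpace X] [MeasurableSpace X]
    [BorelSpace X] {μ : Measure X} {c : ℝ≥0∞} (hc : c ≠ 0) {d : ℝ} (hd : 0 ≤ d)
    (h : c • μ ≤ μH[d]) {A : Set X} (hA : 0 < μ A) : ENNReal.ofReal d ≤ dimH A := by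
  refine le_dimH_of_hausdorffMeasure_ne_zero (d := d.toNNReal) ?_
  rw [Real.coe_toNNReal d hd]
  exact ((ENNReal.mul_pos hc hA.ne').trans_le (h A)).ne'

lemma exists_lt_half_quarter_lt_rpow {d : ℝ} (hd : d < 2) :
    ∃ α ∈ Ioo (0 : ℝ) (1 / 2), 1 / 4 < α ^ d := by
  have hhalf : 1 / 4 < (1 / 2 : ℝ) ^ d := by
    have := Real.rpow_lt_rpow_of_exponent_gt (by norm_num : (0 : ℝ) < 1 / 2) (by norm_num) hd
    norm_num at this ⊢
    exact this
  have hnear : ∀ᶠ α in 𝓝[<] (1 / 2 : ℝ), 1 / 4 < α ^ d :=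
    nhdsWithin_le_nhds <|
      (Real.continuousAt_rpow_const _ _ (Or.inl (by norm_num))).eventually (lt_mem_nhds hhalf)
  obtain ⟨α, hα, hαd⟩ :=
    (Filter.Eventually.and (Ioo_mem_nhdsLT (by norm_num : (0 : ℝ) < 1 / 2)) hnear).exists
  exact ⟨α, hα, hαd⟩

open MeasureTheory in
theorem stmt7 (η : ℝ) (hη : 0 < η) :
    ∃ α ∈ Set.Ioo (0 : ℝ) (1 / 2), ∃ ε : ℝ, 0 < ε ∧
      ∀ μ : Measure (EuclideanSpace ℝ (Fin 2)), IsProbabilityMeasure μ →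
        μ (Set.range (cantorPi α)) = 1 →
        (∀ (n : ℕ) (w : Fin n → Fin 4),
          ENNReal.ofReal (((1 + ε) ^ n)⁻¹ * ((4 : ℝ) ^ n)⁻¹) ≤ μ (cylPiece α w) ∧
            μ (cylPiece α w) ≤ ENNReal.ofReal ((1 + ε) ^ n * ((4 : ℝ) ^ n)⁻¹)) →
        ∀ A : Set (EuclideanSpace ℝ (Fin 2)), MeasurableSet A → 0 < μ A →
          ENNReal.ofReal (2 - η) < dimH A := by
  obtain ⟨d, hηd, hd2⟩ := exists_between (max_lt (by linarith) two_pos : max (2 - η) 0 < 2)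
  have hd : 0 < d := (le_max_right _ _).trans_lt hηd
  obtain ⟨α, hα, hαd⟩ := exists_lt_half_quarter_lt_rpow hd2
  refine ⟨α, hα, 4 * α ^ d - 1, by linarith, fun μ _ hK hcyl A _ hA => ?_⟩
  have hcyl' (n : ℕ) (w : Fin n → Fin 4) : μ (cylPiece α w) ≤ ENNReal.ofReal (α ^ d) ^ n := by
    convert (hcyl n w).2 using 1
    rw [← ENNReal.ofReal_pow (by positivity), add_sub_cancel, mul_pow]
    field_simp
  have hc : 0 < 1 - 2 * α := by linarith [hα.2]
  calc ENNReal.ofReal (2 - η) < ENNReal.ofReal d :=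
        (ENNReal.ofReal_lt_ofReal_iff hd).2 ((le_max_left _ _).trans_lt hηd)
    _ ≤ dimH A := ofReal_le_dimH_of_smul_le_hausdorffMeasure
        (ENNReal.ofReal_pos.2 (by positivity)).ne' hd.le
        (smul_le_hausdorffMeasure hα.1 hα.2 hd hK hcyl') hA
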